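/- Define f(r(i,j)) = (i−1)(2n−1) + j and r(i,j) = (j−1)(2m−1) + i for 1 ≤ i ≤ m, 1 ≤ j ≤ n, and f(r̃(i,j)) = (i−1)(2n−1) − j + 2 and r̃(i,j) = (j−1)(2m−1) − i + 2 for 2 ≤ i ≤ m, 2 ≤ j ≤ n. Then both f and the value map are injective on the union of the domains: all m·n + (m−1)(n−1) positions f(q) are distinct integers in [1, mn+(m−1)(n−1)], and all m·n + (m−1)(n−1) values q are distinct integers in [1, mn+(m−1)(n−1)]. -/
import Mathlib


/-- Formal tokens: `r i j` (weight `c - d i j`) and `rt i j` (the token `r̃(i,j)`, weight `c`). -/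
inductive Tok where
  | r  (i j : ℕ) : Tok
  | rt (i j : ℕ) : Tok
deriving DecidableEq

/-- The domain of tokens: `r(i,j)` for `1 ≤ i ≤ m`, `1 ≤ j ≤ n`,
and `r̃(i,j)` for `2 ≤ i ≤ m`, `2 ≤ j ≤ n`. -/
def TokDom (m n : ℕ) : Tok → Prop
  | .r i j  => 1 ≤ i ∧ i ≤ m ∧ 1 ≤ j ∧ j ≤ n
  | .rt i j => 2 ≤ i ∧ i ≤ m ∧ 2 ≤ j ∧ j ≤ n

/-- The position `f(q)` of a token in the sequence `R_{A,B}`. -/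
def tpos (n : ℕ) : Tok → ℕ
  | .r i j  => (i - 1) * (2 * n - 1) + j
  | .rt i j => (i - 1) * (2 * n - 1) - j + 2

/-- The integer value of a token in the sequence `R_{A,B}`. -/
def tval (m : ℕ) : Tok → ℕ
  | .r i j  => (j - 1) * (2 * m - 1) + i
  | .rt i j => (j - 1) * (2 * m - 1) - i + 2

/-- The (half-integer) row coordinate `i_q` of a token. -/
def iq : Tok → ℚ
  | .r i _  => i
  | .rt i _ => (i : ℚ) - 1/2

/-- The (half-integer) column coordinate `j_q` of a token. -/
def jq : Tok → ℚ
  | .r _ j  => j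
  | .rt _ j => (j : ℚ) - 1/2

/-- The weight of a token: `c - d i j` for `r(i,j)` and `c` for `r̃(i,j)`. -/
def tw (c : ℕ) (d : ℕ → ℕ → ℕ) : Tok → ℕ
  | .r i j => c - d i j
  | .rt _ _ => c

/-- `Q` is an increasing subsequence of the segment of `R_{A,B}` occupying
positions `pl` through `pr`: its tokens are in the domain, their positions lie in
`[pl, pr]` and strictly increase, and their values strictly increase. -/
def IncSeg (m n pl pr : ℕ) (Q : List Tok) : Prop :=
  (∀ t ∈ Q, TokDom m n t ∧ pl ≤ tpos n t ∧ tpos n t ≤ pr) ∧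
    Q.Chain' fun t t' => tpos n t < tpos n t' ∧ tval m t < tval m t'

/-- `Q` is `[a:b]`-banded: every value lies in `[a, b]`. -/
def Banded (m a b : ℕ) (Q : List Tok) : Prop :=
  ∀ t ∈ Q, a ≤ tval m t ∧ tval m t ≤ b

/-- `Q` is a maximal increasing subsequence of the segment `[pl, pr]` of `R_{A,B}`:
it is the only increasing subsequence of the segment having it as a subsequence. -/
def MaxIncSeg (m n pl pr : ℕ) (Q : List Tok) : Prop :=
  IncSeg m n pl pr Q ∧ ∀ Q', IncSeg m n pl pr Q' → Q.Sublist Q' → Q' = Q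

/-- `Q` is a maximal `[a:b]`-banded increasing subsequence of the segment `[pl, pr]`. -/
def MaxBandIncSeg (m n pl pr a b : ℕ) (Q : List Tok) : Prop :=
  IncSeg m n pl pr Q ∧ Banded m a b Q ∧
    ∀ Q', IncSeg m n pl pr Q' → Banded m a b Q' → Q.Sublist Q' → Q' = Q



/-- Auxiliary: explicit inverse of the position map. -/
def ginv' (n k : ℕ) : Tok :=
  if (k-1) % (2*n-1) < n then .r ((k-1)/(2*n-1)+1) ((k-1)%(2*n-1)+1)
  else .rt ((k-1)/(2*n-1)+2) (2*n - (k-1)%(2*n-1))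

lemma tpos_mapsTo' (m n : ℕ) (hm : 1 ≤ m) (hn : 1 ≤ n) :
    Set.MapsTo (tpos n) {t | TokDom m n t}
      (Set.Icc 1 (m * n + (m - 1) * (n - 1))) := by
  obtain ⟨m, rfl⟩ : ∃ m', m = m' + 1 := ⟨m - 1, by omega⟩
  obtain ⟨n, rfl⟩ : ∃ n', n = n' + 1 := ⟨n - 1, by omega⟩
  have hD : 2 * (n+1) - 1 = 2*n+1 := by omega
  rintro (⟨i,j⟩|⟨i,j⟩) ht
  · obtain ⟨h1, h2, h3, h4⟩ := ht
    obtain ⟨i, rfl⟩ : ∃ i', i = i' + 1 := ⟨i - 1, by omega⟩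
    simp only [tpos, Set.mem_Icc, hD, Nat.add_sub_cancel]
    have h6 : i * (2*n+1) ≤ m * (2*n+1) := Nat.mul_le_mul_right _ (by omega)
    have h7 : (m+1) * (n+1) + m*n = m * (2*n+1) + (n+1) := by ring
    omega
  · obtain ⟨h1, h2, h3, h4⟩ := ht
    obtain ⟨i, rfl⟩ : ∃ i', i = i' + 2 := ⟨i - 2, by omega⟩
    have h5 : i + 2 - 1 = i + 1 := by omega
    simp only [tpos, Set.mem_Icc, hD, h5, Nat.add_sub_cancel]
    have h8 : (i+1) * (2*n+1) = i * (2*n+1) + (2*n+1) := by ring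
    rw [h8]
    have h6 : i * (2*n+1) + (2*n+1) ≤ m * (2*n+1) := by
      have : (i+1) * (2*n+1) ≤ m * (2*n+1) := Nat.mul_le_mul_right _ (by omega)
      omega
    have h7 : (m+1) * (n+1) + m*n = m * (2*n+1) + (n+1) := by ring
    generalize i * (2*n+1) = P at *
    generalize m * (2*n+1) = Q at *
    omega

lemma ginv_tpos' (m n : ℕ) (hn : 1 ≤ n) :
    ∀ t, TokDom m n t → ginv' n (tpos n t) = t := by
  obtain ⟨n, rfl⟩ : ∃ n', n = n' + 1 := ⟨n - 1, by omega⟩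
  have hD : 2 * (n+1) - 1 = 2*n+1 := by omega
  rintro (⟨i,j⟩|⟨i,j⟩) ⟨h1, h2, h3, h4⟩
  · obtain ⟨i, rfl⟩ : ∃ i', i = i' + 1 := ⟨i - 1, by omega⟩
    obtain ⟨j, rfl⟩ : ∃ j', j = j' + 1 := ⟨j - 1, by omega⟩
    simp only [tpos, ginv', hD, Nat.add_sub_cancel]
    have e : i * (2*n+1) + (j+1) - 1 = j + i * (2*n+1) := by
      generalize i * (2*n+1) = P; omega
    rw [e, Nat.add_mul_div_right _ _ (by omega), Nat.add_mul_mod_self_right,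
      Nat.div_eq_of_lt (by omega), Nat.mod_eq_of_lt (by omega)]
    simp only [if_pos (by omega : j < n + 1)]
    congr 1
    omega
  · obtain ⟨i, rfl⟩ : ∃ i', i = i' + 2 := ⟨i - 2, by omega⟩
    obtain ⟨j, rfl⟩ : ∃ j', j = j' + 2 := ⟨j - 2, by omega⟩
    have h5 : i + 2 - 1 = i + 1 := by omega
    simp only [tpos, ginv', hD, h5]
    have h8 : (i+1) * (2*n+1) = i * (2*n+1) + (2*n+1) := by ring
    rw [h8]
    have e : i * (2*n+1) + (2*n+1) - (j+2) + 2 - 1 = (2*n - j) + i * (2*n+1) := by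
      generalize i * (2*n+1) = P; omega
    rw [e, Nat.add_mul_div_right _ _ (by omega), Nat.add_mul_mod_self_right,
      Nat.div_eq_of_lt (by omega), Nat.mod_eq_of_lt (by omega)]
    simp only [if_neg (by omega : ¬ (2*n - j < n + 1))]
    congr 1 <;> omega

lemma tpos_ginv' (m n : ℕ) (hm : 1 ≤ m) (hn : 1 ≤ n) :
    ∀ k ∈ Set.Icc 1 (m * n + (m - 1) * (n - 1)),
      TokDom m n (ginv' n k) ∧ tpos n (ginv' n k) = k := by
  obtain ⟨m, rfl⟩ : ∃ m', m = m' + 1 := ⟨m - 1, by omega⟩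
  obtain ⟨n, rfl⟩ : ∃ n', n = n' + 1 := ⟨n - 1, by omega⟩
  have hD : 2 * (n+1) - 1 = 2*n+1 := by omega
  intro k hk
  simp only [Set.mem_Icc, Nat.add_sub_cancel] at hk
  obtain ⟨hk1, hk2⟩ := hk
  obtain ⟨q, s, hq, hs⟩ : ∃ q s, (k-1)/(2*(n+1)-1) = q ∧ (k-1)%(2*(n+1)-1) = s :=
    ⟨_, _, rfl, rfl⟩
  have hdm : s + q * (2*n+1) = k - 1 := by
    rw [← hq, ← hs, hD]; exact Nat.mod_add_div' _ _
  have hsl : s < 2*n+1 := by rw [← hs, hD]; exact Nat.mod_lt _ (by omega)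
  have hN : (m+1) * (n+1) + m*n = m * (2*n+1) + (n+1) := by ring
  have hM : (m+1) * (2*n+1) = m * (2*n+1) + (2*n+1) := by ring
  have hqm : q ≤ m := by
    by_contra h
    have h2 : (m+1) * (2*n+1) ≤ q * (2*n+1) := Nat.mul_le_mul_right _ (by omega)
    generalize q * (2*n+1) = P at *
    generalize m * (2*n+1) = Q at *
    generalize (m+1) * (2*n+1) = R at *
    generalize (m+1) * (n+1) = S at *
    generalize m * n = T at *
    omega
  simp only [ginv', hq, hs]
  by_cases hc : s < n + 1
  · simp only [if_pos hc]
    refine ⟨⟨by omega, by omega, by omega, by omega⟩, ?_⟩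
    simp only [tpos, hD, Nat.add_sub_cancel]
    omega
  · simp only [if_neg hc]
    push_neg at hc
    have hqm2 : q + 1 ≤ m := by
      by_contra h
      have h2 : m * (2*n+1) ≤ q * (2*n+1) := Nat.mul_le_mul_right _ (by omega)
      generalize q * (2*n+1) = P at *
      generalize m * (2*n+1) = Q at *
      generalize (m+1) * (n+1) = S at *
      generalize m * n = T at *
      omega
    refine ⟨⟨by omega, by omega, by omega, by omega⟩, ?_⟩
    simp only [tpos, hD]
    have h5 : q + 2 - 1 = q + 1 := by omega
    rw [h5]
    have h8 : (q+1) * (2*n+1) = q * (2*n+1) + (2*n+1) := by ring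
    rw [h8]
    generalize q * (2*n+1) = P at *
    omega

lemma tpos_bijOn' (m n : ℕ) (hm : 1 ≤ m) (hn : 1 ≤ n) :
    Set.BijOn (tpos n) {t | TokDom m n t}
      (Set.Icc 1 (m * n + (m - 1) * (n - 1))) := by
  have h := tpos_ginv' m n hm hn
  exact Set.InvOn.bijOn ⟨fun t ht => ginv_tpos' m n hn t ht, fun k hk => (h k hk).2⟩
    (tpos_mapsTo' m n hm hn) (fun k hk => (h k hk).1)

/-- Auxiliary: swap the indices of a token. -/
def tswap' : Tok → Tok
  | .r i j => .r j i
  | .rt i j => .rt j i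

theorem positions_and_values_are_permutations (m n : ℕ) (hm : 1 ≤ m) (hn : 1 ≤ n) :
    Set.BijOn (tpos n) {t | TokDom m n t}
        (Set.Icc 1 (m * n + (m - 1) * (n - 1))) ∧
      Set.BijOn (tval m) {t | TokDom m n t}
        (Set.Icc 1 (m * n + (m - 1) * (n - 1))) := by
  constructor
  · exact tpos_bijOn' m n hm hn
  · have hswap : ∀ t, tswap' (tswap' t) = t := by rintro (⟨i,j⟩|⟨i,j⟩) <;> rfl
    have hmaps : Set.MapsTo tswap' {t | TokDom m n t} {t | TokDom n m t} := by
      rintro (⟨i,j⟩|⟨i,j⟩) ht <;> exact ⟨ht.2.2.1, ht.2.2.2, ht.1, ht.2.1⟩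
    have hmaps' : Set.MapsTo tswap' {t | TokDom n m t} {t | TokDom m n t} := by
      rintro (⟨i,j⟩|⟨i,j⟩) ht <;> exact ⟨ht.2.2.1, ht.2.2.2, ht.1, ht.2.1⟩
    have hbs : Set.BijOn tswap' {t | TokDom m n t} {t | TokDom n m t} :=
      Set.InvOn.bijOn ⟨fun t _ => hswap t, fun t _ => hswap t⟩ hmaps hmaps'
    have heq : tval m = tpos m ∘ tswap' := funext fun t => by cases t <;> rfl
    have hco : n * m + (n - 1) * (m - 1) = m * n + (m - 1) * (n - 1) := by
      rw [Nat.mul_comm n m, Nat.mul_comm (n-1) (m-1)]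
    rw [heq]
    have := (tpos_bijOn' n m hn hm).comp hbs
    rwa [hco] at this
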